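/- arXiv:1606.03984 — 5 statements merged into one kernel-verified Lean document; each statement's English description precedes it below -/
import Mathlib

section
/- Let N = {i₁,…,iₙ} be a finite set of indices and X a team on N. For every team Y on N, Y ⊨ Θ_X if and only if Y ⊆ X. -/
/-- Formulas of full propositional team logic (FPT), with propositional
variables indexed by a type `V`. -/
inductive PTForm (V : Type) : Type where
  | pos : V → PTForm V
  | neg : V → PTForm V
  | bot : PTForm V
  | ne : PTForm V
  | dep : List V → V → PTForm V
  | indep : List V → List V → PTForm V
  | incl : List V → List V → PTForm V
  | and : PTForm V → PTForm V → PTForm V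
  | tensor : PTForm V → PTForm V → PTForm V
  | nsor : PTForm V → PTForm V → PTForm V
  | bor : PTForm V → PTForm V → PTForm V

/-- Team semantics of full propositional team logic.  A valuation is a
function `V → Bool` and a team is a set of valuations. -/
def PTSat {V : Type} (X : Set (V → Bool)) : PTForm V → Prop
  | .pos i => ∀ s ∈ X, s i = true
  | .neg i => ∀ s ∈ X, s i = false
  | .bot => X = ∅
  | .ne => X ≠ ∅
  | .dep xs y => ∀ s ∈ X, ∀ s' ∈ X, (∀ i ∈ xs, s i = s' i) → s y = s' y
  | .indep xs ys =>
      ∀ s ∈ X, ∀ s' ∈ X, ∃ s'' ∈ X,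
        (∀ i ∈ xs, s'' i = s i) ∧ (∀ j ∈ ys, s'' j = s' j)
  | .incl xs ys => ∀ s ∈ X, ∃ s' ∈ X, ∀ p ∈ List.zip xs ys, s p.1 = s' p.2
  | .and φ ψ => PTSat X φ ∧ PTSat X ψ
  | .tensor φ ψ => ∃ Y Z, X = Y ∪ Z ∧ PTSat Y φ ∧ PTSat Z ψ
  | .nsor φ ψ =>
      X = ∅ ∨ ∃ Y Z, X = Y ∪ Z ∧ Y.Nonempty ∧ Z.Nonempty ∧ PTSat Y φ ∧ PTSat Z ψ
  | .bor φ ψ => PTSat X φ ∨ PTSat X ψ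

/-- The set of propositional variables occurring in a formula. -/
def PTForm.vars {V : Type} : PTForm V → Set V
  | .pos i => {i}
  | .neg i => {i}
  | .bot => ∅
  | .ne => ∅
  | .dep xs y => {i | i ∈ xs} ∪ {y}
  | .indep xs ys => {i | i ∈ xs} ∪ {j | j ∈ ys}
  | .incl xs ys => {i | i ∈ xs} ∪ {j | j ∈ ys}
  | .and φ ψ => φ.vars ∪ ψ.vars
  | .tensor φ ψ => φ.vars ∪ ψ.vars
  | .nsor φ ψ => φ.vars ∪ ψ.vars
  | .bor φ ψ => φ.vars ∪ ψ.vars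

/-- The formula does not contain the atom NE. -/
def PTForm.NEfree {V : Type} : PTForm V → Prop
  | .ne => False
  | .and φ ψ => φ.NEfree ∧ ψ.NEfree
  | .tensor φ ψ => φ.NEfree ∧ ψ.NEfree
  | .nsor φ ψ => φ.NEfree ∧ ψ.NEfree
  | .bor φ ψ => φ.NEfree ∧ ψ.NEfree
  | _ => True

/-- Classical formulas: built from `pᵢ`, `¬pᵢ`, `⊥` using only `∧` and `⊗`. -/
inductive IsClassical {V : Type} : PTForm V → Prop where
  | pos (i : V) : IsClassical (.pos i)
  | neg (i : V) : IsClassical (.neg i)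
  | bot : IsClassical .bot
  | and : ∀ {φ ψ}, IsClassical φ → IsClassical ψ → IsClassical (.and φ ψ)
  | tensor : ∀ {φ ψ}, IsClassical φ → IsClassical ψ → IsClassical (.tensor φ ψ)

/-- The language of strong propositional team logic PT⁺:
atoms `pᵢ`, `¬pᵢ`, `⊥`, `NE` and connectives `∧`, `⊗`, `∨`. -/
inductive IsPTPlus {V : Type} : PTForm V → Prop where
  | pos (i : V) : IsPTPlus (.pos i)
  | neg (i : V) : IsPTPlus (.neg i)
  | bot : IsPTPlus .bot
  | ne : IsPTPlus .ne
  | and : ∀ {φ ψ}, IsPTPlus φ → IsPTPlus ψ → IsPTPlus (.and φ ψ)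
  | tensor : ∀ {φ ψ}, IsPTPlus φ → IsPTPlus ψ → IsPTPlus (.tensor φ ψ)
  | bor : ∀ {φ ψ}, IsPTPlus φ → IsPTPlus ψ → IsPTPlus (.bor φ ψ)

/-- The language of propositional team logic PT:
atoms `pᵢ`, `¬pᵢ`, `⊥` and connectives `∧`, `⊛`, `∨`. -/
inductive IsPT {V : Type} : PTForm V → Prop where
  | pos (i : V) : IsPT (.pos i)
  | neg (i : V) : IsPT (.neg i)
  | bot : IsPT .bot
  | and : ∀ {φ ψ}, IsPT φ → IsPT ψ → IsPT (.and φ ψ)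
  | nsor : ∀ {φ ψ}, IsPT φ → IsPT ψ → IsPT (.nsor φ ψ)
  | bor : ∀ {φ ψ}, IsPT φ → IsPT ψ → IsPT (.bor φ ψ)

/-- The language of propositional union closed logic PU:
atoms `pᵢ`, `¬pᵢ`, `⊥` and connectives `∧`, `⊗`, `⊛`. -/
inductive IsPU {V : Type} : PTForm V → Prop where
  | pos (i : V) : IsPU (.pos i)
  | neg (i : V) : IsPU (.neg i)
  | bot : IsPU .bot
  | and : ∀ {φ ψ}, IsPU φ → IsPU ψ → IsPU (.and φ ψ)
  | tensor : ∀ {φ ψ}, IsPU φ → IsPU ψ → IsPU (.tensor φ ψ)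
  | nsor : ∀ {φ ψ}, IsPU φ → IsPU ψ → IsPU (.nsor φ ψ)

/-- The language of strong propositional union closed logic PU⁺:
atoms `pᵢ`, `¬pᵢ`, `⊥`, `NE` and connectives `∧`, `⊗`, `⊛`. -/
inductive IsPUPlus {V : Type} : PTForm V → Prop where
  | pos (i : V) : IsPUPlus (.pos i)
  | neg (i : V) : IsPUPlus (.neg i)
  | bot : IsPUPlus .bot
  | ne : IsPUPlus .ne
  | and : ∀ {φ ψ}, IsPUPlus φ → IsPUPlus ψ → IsPUPlus (.and φ ψ)
  | tensor : ∀ {φ ψ}, IsPUPlus φ → IsPUPlus ψ → IsPUPlus (.tensor φ ψ)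
  | nsor : ∀ {φ ψ}, IsPUPlus φ → IsPUPlus ψ → IsPUPlus (.nsor φ ψ)

/-- The atom-free team language: atoms `pᵢ`, `¬pᵢ`, `⊥`, `NE` and
connectives `∧`, `⊗`, `⊛`, `∨` (no dependence/independence/inclusion atoms). -/
inductive IsAtomFree {V : Type} : PTForm V → Prop where
  | pos (i : V) : IsAtomFree (.pos i)
  | neg (i : V) : IsAtomFree (.neg i)
  | bot : IsAtomFree .bot
  | ne : IsAtomFree .ne
  | and : ∀ {φ ψ}, IsAtomFree φ → IsAtomFree ψ → IsAtomFree (.and φ ψ)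
  | tensor : ∀ {φ ψ}, IsAtomFree φ → IsAtomFree ψ → IsAtomFree (.tensor φ ψ)
  | nsor : ∀ {φ ψ}, IsAtomFree φ → IsAtomFree ψ → IsAtomFree (.nsor φ ψ)
  | bor : ∀ {φ ψ}, IsAtomFree φ → IsAtomFree ψ → IsAtomFree (.bor φ ψ)

/-- The literal `pᵢ^{s(i)}`, i.e. `pᵢ` if `s i = 1` and `¬pᵢ` if `s i = 0`. -/
def PTlit {V : Type} (s : V → Bool) (i : V) : PTForm V :=
  if s i then .pos i else .neg i

/-- Conjunction of a nonempty list headed by the first argument. -/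
def PTandAux {V : Type} : PTForm V → List (PTForm V) → PTForm V
  | φ, [] => φ
  | φ, ψ :: l => .and φ (PTandAux ψ l)

/-- Conjunction of a list of formulas (only used on nonempty lists). -/
def PTandList {V : Type} : List (PTForm V) → PTForm V
  | [] => .bot
  | φ :: l => PTandAux φ l

/-- The formula `p_{i₁}^{s(i₁)} ∧ … ∧ p_{iₙ}^{s(iₙ)}` describing the
valuation `s`, where `{i₁, …, iₙ}` enumerates all of `V`. -/
noncomputable def PTdescr {V : Type} [Fintype V] (s : V → Bool) : PTForm V :=
  PTandList ((Finset.univ : Finset V).toList.map (PTlit s))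

/-- Tensor disjunction `⊗` of a list of formulas; the empty tensor
disjunction is `⊥`. -/
def PTtensorList {V : Type} (l : List (PTForm V)) : PTForm V :=
  l.foldr PTForm.tensor PTForm.bot

/-- Nonempty disjunction `⊛` of a nonempty list headed by the first argument. -/
def PTnsorAux {V : Type} : PTForm V → List (PTForm V) → PTForm V
  | φ, [] => φ
  | φ, ψ :: l => .nsor φ (PTnsorAux ψ l)

/-- Nonempty disjunction `⊛` of a list of formulas; the empty nonempty
disjunction is `⊥`. -/
def PTnsorList {V : Type} : List (PTForm V) → PTForm V
  | [] => .bot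
  | φ :: l => PTnsorAux φ l

/-- Boolean disjunction `∨` of a list of formulas; the empty Boolean
disjunction is `⊥ ∧ NE`. -/
def PTborList {V : Type} (l : List (PTForm V)) : PTForm V :=
  l.foldr PTForm.bor (PTForm.and PTForm.bot PTForm.ne)

/-- The formula `Θ_X := ⊗_{s∈X} (p_{i₁}^{s(i₁)} ∧ … ∧ p_{iₙ}^{s(iₙ)})`. -/
noncomputable def PTtheta {V : Type} [Fintype V] (X : Finset (V → Bool)) : PTForm V :=
  PTtensorList (X.toList.map PTdescr)

/-- The formula `Θ*_X := ⊗_{s∈X} (p_{i₁}^{s(i₁)} ∧ … ∧ p_{iₙ}^{s(iₙ)} ∧ NE)`. -/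
noncomputable def PTthetaStar {V : Type} [Fintype V] (X : Finset (V → Bool)) : PTForm V :=
  PTtensorList (X.toList.map (fun s => .and (PTdescr s) .ne))

/-- The formula `Θ**_X := ⊛_{s∈X} (p_{i₁}^{s(i₁)} ∧ … ∧ p_{iₙ}^{s(iₙ)})`. -/
noncomputable def PTthetaSS {V : Type} [Fintype V] (X : Finset (V → Bool)) : PTForm V :=
  PTnsorList (X.toList.map PTdescr)

/-- Logical consequence: every team satisfying all formulas of `Γ`
satisfies `φ`. -/
def PTEntails {V : Type} (Γ : Set (PTForm V)) (φ : PTForm V) : Prop :=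
  ∀ X : Set (V → Bool), (∀ ψ ∈ Γ, PTSat X ψ) → PTSat X φ

/-- A team property is flat if a team is in it iff all its singleton
subteams are. -/
def IsFlat {V : Type} (P : Set (Set (V → Bool))) : Prop :=
  ∀ X : Set (V → Bool), X ∈ P ↔ ∀ s ∈ X, ({s} : Set (V → Bool)) ∈ P

/-- A team property is union closed if it is closed under unions of
nonempty subfamilies. -/
def IsUnionClosed {V : Type} (P : Set (Set (V → Bool))) : Prop :=
  ∀ 𝒳 ⊆ P, 𝒳.Nonempty → ⋃₀ 𝒳 ∈ P

/-- The syntactic De Morgan negation of a classical formula. -/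
def PTdeMorgan : PTForm ℕ → PTForm ℕ
  | .pos i => .neg i
  | .neg i => .pos i
  | .bot => .tensor (.pos 0) (.neg 0)
  | .and φ ψ => .tensor (PTdeMorgan φ) (PTdeMorgan ψ)
  | .tensor φ ψ => .and (PTdeMorgan φ) (PTdeMorgan ψ)
  | φ => φ

/-- Application of a substitution `σ` (assigning a formula to each
propositional variable) to a formula of the atom-free team language. -/
def PTsubst (σ : ℕ → PTForm ℕ) : PTForm ℕ → PTForm ℕ
  | .pos i => σ i
  | .neg i => PTdeMorgan (σ i)
  | .and φ ψ => .and (PTsubst σ φ) (PTsubst σ ψ)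
  | .tensor φ ψ => .tensor (PTsubst σ φ) (PTsubst σ ψ)
  | .nsor φ ψ => .nsor (PTsubst σ φ) (PTsubst σ ψ)
  | .bor φ ψ => .bor (PTsubst σ φ) (PTsubst σ ψ)
  | φ => φ

open Classical in
/-- The valuation `s_σ`, with `s_σ(i) = 1` iff `{s} ⊨ σ(pᵢ)`. -/
noncomputable def PTvalSubst (σ : ℕ → PTForm ℕ) (s : ℕ → Bool) : ℕ → Bool :=
  fun i => if PTSat {s} (σ i) then true else false

/-!
A team satisfies the description `p_{i₁}^{s(i₁)} ∧ … ∧ p_{iₙ}^{s(iₙ)}` exactly when it is a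
subteam of `{s}`. A tensor disjunction of formulas whose models are exactly the subteams of
`A₁, …, Aₖ` has as models exactly the subteams of `A₁ ∪ … ∪ Aₖ`: a subteam `Y` of the union
splits as the union of the pieces `Y ∩ Aⱼ`. Taking `Aₛ = {s}` for `s ∈ X` gives the theorem.
-/

section TeamSemantics

variable {V : Type}

lemma PTSat_andAux (Y : Set (V → Bool)) (φ : PTForm V) (l : List (PTForm V)) :
    PTSat Y (PTandAux φ l) ↔ ∀ ψ ∈ φ :: l, PTSat Y ψ := by
  induction l generalizing φ with
  | nil => simp [PTandAux]
  | cons ψ l ih =>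
    simp only [PTandAux, PTSat, ih, List.forall_mem_cons]

lemma PTSat_andList {l : List (PTForm V)} (hl : l ≠ []) (Y : Set (V → Bool)) :
    PTSat Y (PTandList l) ↔ ∀ ψ ∈ l, PTSat Y ψ := by
  obtain ⟨φ, l, rfl⟩ := List.exists_cons_of_ne_nil hl
  exact PTSat_andAux Y φ l

lemma PTSat_lit (Y : Set (V → Bool)) (s : V → Bool) (i : V) :
    PTSat Y (PTlit s i) ↔ ∀ t ∈ Y, t i = s i := by
  unfold PTlit
  cases s i <;> simp [PTSat]

lemma PTSat_descr [Fintype V] [Nonempty V] (Y : Set (V → Bool)) (s : V → Bool) :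
    PTSat Y (PTdescr s) ↔ Y ⊆ {s} := by
  have hne : ((Finset.univ : Finset V).toList.map (PTlit s)) ≠ [] := by
    simp [Finset.univ_nonempty.ne_empty]
  rw [PTdescr, PTSat_andList hne]
  simp only [List.forall_mem_map, Finset.mem_toList, Finset.mem_univ, forall_const, PTSat_lit]
  exact ⟨fun h t ht => funext fun i => h i t ht, fun h i t ht => by rw [h ht]⟩

lemma PTSat_tensorList_map_iff_subset_biUnion {α : Type*} (f : α → PTForm V)
    (A : α → Set (V → Bool)) (hA : ∀ Z a, PTSat Z (f a) ↔ Z ⊆ A a)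
    (l : List α) (Y : Set (V → Bool)) :
    PTSat Y (PTtensorList (l.map f)) ↔ Y ⊆ ⋃ a ∈ l, A a := by
  induction l generalizing Y with
  | nil => simp [PTtensorList, PTSat, Set.subset_empty_iff]
  | cons a l ih =>
    simp only [List.map_cons, PTtensorList, List.foldr_cons, PTSat, List.mem_cons,
      Set.iUnion_iUnion_eq_or_left]
    rw [← PTtensorList]
    constructor
    · rintro ⟨B, C, rfl, hB, hC⟩
      exact Set.union_subset_union ((hA B a).mp hB) ((ih C).mp hC)
    · intro hY
      refine ⟨Y ∩ A a, Y ∩ ⋃ b ∈ l, A b, ?_, (hA _ a).mpr Set.inter_subset_right,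
        (ih _).mpr Set.inter_subset_right⟩
      rw [← Set.inter_union_distrib_left, Set.inter_eq_left.mpr hY]

end TeamSemantics

/-- For a team `X` on a finite (nonempty) index set, a team `Y` satisfies
`Θ_X` if and only if `Y ⊆ X`. -/
theorem theta_characterizes_subteams (V : Type) [Fintype V] [Nonempty V]
    (X : Finset (V → Bool)) (Y : Set (V → Bool)) :
    PTSat Y (PTtheta X) ↔ Y ⊆ ↑X := by
  rw [PTtheta, PTSat_tensorList_map_iff_subset_biUnion PTdescr (fun s => {s}) PTSat_descr]
  simp only [Finset.mem_toList, ← Finset.mem_coe, Set.biUnion_of_singleton]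
end

section
/- Classical propositional logic characterizes under team semantics the set of all flat team properties: for every finite index set N = {i₁,…,iₙ}, (a) for every classical formula φ whose variables are among {p_i : i∈N}, the set ⟦φ⟧ = {Y ⊆ 2^N : Y ⊨ φ} is a flat team property on N; and (b) for every flat team property P ⊆ 𝒫(2^N) there is a classical formula φ whose variables are among {p_i : i∈N} such that ⟦φ⟧ = P. -/
/-! A classical formula `φ` holds in a team `X` exactly when `X ⊆ {s | {s} ⊨ φ}`; the only
non-trivial case is `⊗`, where `X` splits into a subteam of `A` and one of `B` iff
`X ⊆ A ∪ B`. Conversely, a flat property consists of the subteams of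
`A = {s | {s} ∈ P}`, and these are defined by the tensor disjunction, over `s ∈ A`, of the
conjunction of literals describing `s`. -/

theorem exists_union_eq_and_subset_and_subset_iff {α : Type*} {X A B : Set α} :
    (∃ Y Z, X = Y ∪ Z ∧ Y ⊆ A ∧ Z ⊆ B) ↔ X ⊆ A ∪ B := by
  constructor
  · rintro ⟨Y, Z, rfl, hY, hZ⟩
    exact Set.union_subset_union hY hZ
  · intro hX
    refine ⟨X ∩ A, X ∩ B, ?_, Set.inter_subset_right, Set.inter_subset_right⟩
    rw [← Set.inter_union_distrib_left, Set.inter_eq_left.2 hX]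

section Flat

variable {V : Type}

theorem isFlat_setOf_subset (A : Set (V → Bool)) : IsFlat {X | X ⊆ A} := fun X => by
  simp only [Set.mem_ofPred_eq, Set.subset_def, Set.mem_singleton_iff, forall_eq]

theorem IsFlat.eq_setOf_subset {P : Set (Set (V → Bool))} (hP : IsFlat P) :
    P = {X | X ⊆ {s | {s} ∈ P}} :=
  Set.ext hP

end Flat

namespace IsClassical

variable {V : Type} {φ : PTForm V}

theorem ptSat_iff_subset (hφ : IsClassical φ) (X : Set (V → Bool)) :
    PTSat X φ ↔ X ⊆ {s | PTSat {s} φ} := by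
  induction hφ generalizing X with
  | pos i | neg i =>
    simp only [PTSat, Set.mem_singleton_iff, forall_eq]
    rfl
  | bot => simp only [PTSat, Set.singleton_ne_empty, Set.ofPred_false, Set.subset_empty_iff]
  | and _ _ ih₁ ih₂ =>
    simp only [PTSat, ih₁ X, ih₂ X]
    exact Set.subset_inter_iff.symm
  | @tensor φ ψ _ _ ih₁ ih₂ =>
    have ptSat_tensor_iff (Y : Set (V → Bool)) :
        PTSat Y (.tensor φ ψ) ↔ Y ⊆ {s | PTSat {s} φ} ∪ {s | PTSat {s} ψ} :=
      (exists₂_congr fun _ _ => and_congr_right' (and_congr (ih₁ _) (ih₂ _))).trans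
        exists_union_eq_and_subset_and_subset_iff
    simp only [ptSat_tensor_iff, Set.singleton_subset_iff]
    rfl

theorem isFlat (hφ : IsClassical φ) : IsFlat {X : Set (V → Bool) | PTSat X φ} := by
  rw [Set.ext hφ.ptSat_iff_subset]
  exact isFlat_setOf_subset _

end IsClassical

section Theta

variable {V : Type}

theorem ptSat_lit_iff (s : V → Bool) (i : V) (X : Set (V → Bool)) :
    PTSat X (PTlit s i) ↔ ∀ t ∈ X, t i = s i := by
  unfold PTlit
  cases s i <;> simp [PTSat]

theorem ptSat_andAux_iff (φ : PTForm V) (l : List (PTForm V)) (X : Set (V → Bool)) :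
    PTSat X (PTandAux φ l) ↔ ∀ ψ ∈ φ :: l, PTSat X ψ := by
  induction l generalizing φ with
  | nil => simp [PTandAux]
  | cons ψ l ih =>
    rw [List.forall_mem_cons, ← ih]
    rfl

theorem ptSat_andList_iff {l : List (PTForm V)} (hl : l ≠ []) (X : Set (V → Bool)) :
    PTSat X (PTandList l) ↔ ∀ ψ ∈ l, PTSat X ψ := by
  obtain ⟨φ, l, rfl⟩ := List.exists_cons_of_ne_nil hl
  exact ptSat_andAux_iff φ l X

theorem ptSat_descr_iff [Fintype V] [Nonempty V] (s : V → Bool) (X : Set (V → Bool)) :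
    PTSat X (PTdescr s) ↔ X ⊆ {s} := by
  -- the empty conjunction `PTandList []` is `⊥`, hence `Nonempty V`
  have hne : (Finset.univ : Finset V).toList.map (PTlit s) ≠ [] := by
    simp [Finset.univ_nonempty.ne_empty]
  rw [PTdescr, ptSat_andList_iff hne, Set.subset_singleton_iff]
  simp only [List.forall_mem_map, Finset.mem_toList, Finset.mem_univ, forall_const,
    ptSat_lit_iff]
  exact ⟨fun h t ht => funext fun i => h i t ht, fun h i t ht => by rw [h t ht]⟩

theorem ptSat_tensorList_map_descr_iff [Fintype V] [Nonempty V] (L : List (V → Bool))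
    (X : Set (V → Bool)) :
    PTSat X (PTtensorList (L.map PTdescr)) ↔ X ⊆ {t | t ∈ L} := by
  induction L generalizing X with
  | nil => simp [PTtensorList, PTSat, Set.subset_empty_iff]
  | cons s L ih =>
    have hL : {t | t ∈ s :: L} = {s} ∪ {t | t ∈ L} := by ext; simp
    change (∃ Y Z, X = Y ∪ Z ∧ PTSat Y (PTdescr s) ∧ PTSat Z (PTtensorList (L.map PTdescr))) ↔ _
    simp only [ptSat_descr_iff, ih, hL, exists_union_eq_and_subset_and_subset_iff]

theorem ptSat_theta_iff [Fintype V] [Nonempty V] (S : Finset (V → Bool))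
    (X : Set (V → Bool)) : PTSat X (PTtheta S) ↔ X ⊆ S := by
  rw [PTtheta, ptSat_tensorList_map_descr_iff]
  simp only [Finset.mem_toList, Finset.setOfPred_mem]

theorem isClassical_lit (s : V → Bool) (i : V) : IsClassical (PTlit s i) := by
  unfold PTlit
  split
  · exact .pos i
  · exact .neg i

theorem isClassical_andAux {φ : PTForm V} {l : List (PTForm V)}
    (hl : ∀ ψ ∈ φ :: l, IsClassical ψ) : IsClassical (PTandAux φ l) := by
  induction l generalizing φ with
  | nil => exact hl φ List.mem_cons_self
  | cons ψ l ih =>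
    rw [List.forall_mem_cons] at hl
    exact .and hl.1 (ih hl.2)

theorem isClassical_andList {l : List (PTForm V)} (hl : ∀ ψ ∈ l, IsClassical ψ) :
    IsClassical (PTandList l) := by
  cases l with
  | nil => exact .bot
  | cons φ l => exact isClassical_andAux hl

theorem isClassical_tensorList {l : List (PTForm V)} (hl : ∀ ψ ∈ l, IsClassical ψ) :
    IsClassical (PTtensorList l) := by
  induction l with
  | nil => exact .bot
  | cons φ l ih =>
    rw [List.forall_mem_cons] at hl
    exact .tensor hl.1 (ih hl.2)

theorem isClassical_theta [Fintype V] (S : Finset (V → Bool)) : IsClassical (PTtheta S) :=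
  isClassical_tensorList <| List.forall_mem_map.2 fun s _ =>
    isClassical_andList <| List.forall_mem_map.2 fun i _ => isClassical_lit s i

end Theta

/-- **CPL characterizes the flat team properties.**  (a) Every classical
formula defines a flat team property; (b) every flat team property on a
finite (nonempty) index set is definable by a classical formula. -/
theorem cpl_characterizes_flat_properties (V : Type) [Fintype V] [Nonempty V] :
    (∀ φ : PTForm V, IsClassical φ →
      IsFlat {X : Set (V → Bool) | PTSat X φ}) ∧
    (∀ P : Set (Set (V → Bool)), IsFlat P →
      ∃ φ : PTForm V, IsClassical φ ∧ {X : Set (V → Bool) | PTSat X φ} = P) := by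
  refine ⟨fun φ hφ => hφ.isFlat, fun P hP => ?_⟩
  classical
  refine ⟨PTtheta {s | {s} ∈ P}, isClassical_theta _, ?_⟩
  calc {X | PTSat X (PTtheta _)} = {X | X ⊆ {s | {s} ∈ P}} := by
        simp only [ptSat_theta_iff, Finset.coe_filter_univ]
    _ = P := hP.eq_setOf_subset.symm
end

section
/- For every formula φ of full propositional team logic (FPT) the following are equivalent: (i) φ has the Flatness Property (for every team X, X ⊨ φ iff {s} ⊨ φ for all s∈X); (ii) φ is semantically equivalent to a classical formula (there is a classical formula ψ such that for every team X, X ⊨ φ iff X ⊨ ψ); (iii) φ has the Downward Closure Property (if X ⊨ φ and Y ⊆ X then Y ⊨ φ) and the Union Closure Property (for every, possibly empty, family 𝒳 of teams each satisfying φ, the union ⋃𝒳 satisfies φ). -/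
/-! A formula is flat exactly when it is defined pointwise by a predicate on valuations.
Classical formulas are flat because `∧` and `⊗` of pointwise defined formulas are pointwise
defined, by the conjunction and the disjunction of the predicates. Conversely, on singleton teams
every formula only sees its finitely many variables, so the predicate of a flat formula is a
Boolean function of finitely many variables, and the Shannon expansion
`(pᵢ ∧ ψ₁) ⊗ (¬pᵢ ∧ ψ₀)` turns it into a classical formula. Flatness is equivalent to downward
and union closure for any team property, since a team is the union of its singleton subteams. -/

theorem isFlat_iff_downwardClosed_and_unionClosed {V : Type} (P : Set (Set (V → Bool))) :
    IsFlat P ↔ (∀ X Y : Set (V → Bool), X ∈ P → Y ⊆ X → Y ∈ P) ∧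
      ∀ 𝒳 : Set (Set (V → Bool)), (∀ X ∈ 𝒳, X ∈ P) → ⋃₀ 𝒳 ∈ P := by
  constructor
  · intro hP
    refine ⟨fun X Y hX hYX => (hP Y).2 fun s hs => (hP X).1 hX s (hYX hs), fun 𝒳 h𝒳 => ?_⟩
    exact (hP _).2 fun s ⟨X, hX, hsX⟩ => (hP X).1 (h𝒳 X hX) s hsX
  · rintro ⟨hdown, hunion⟩ X
    refine ⟨fun hX s hs => hdown X {s} hX (Set.singleton_subset_iff.2 hs), fun hX => ?_⟩
    have hunion_singletons := hunion ((fun s => {s}) '' X) (by rintro _ ⟨s, hs, rfl⟩; exact hX s hs)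
    rwa [Set.sUnion_image, Set.biUnion_of_singleton] at hunion_singletons

section FlatlyDefines

variable {V : Type}

def FlatlyDefines (φ : PTForm V) (A : (V → Bool) → Prop) : Prop :=
  ∀ X : Set (V → Bool), PTSat X φ ↔ ∀ s ∈ X, A s

variable {φ ψ : PTForm V} {A B : (V → Bool) → Prop}

theorem FlatlyDefines.congr (h : FlatlyDefines φ A) (hAB : ∀ s, A s ↔ B s) :
    FlatlyDefines φ B :=
  fun X => (h X).trans (forall₂_congr fun s _ => hAB s)

theorem FlatlyDefines.sat_singleton_iff (h : FlatlyDefines φ A) (s : V → Bool) :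
    PTSat {s} φ ↔ A s :=
  (h {s}).trans (by simp)

theorem FlatlyDefines.isFlat (h : FlatlyDefines φ A) : IsFlat {X | PTSat X φ} :=
  fun X => (h X).trans (forall₂_congr fun s _ => (h.sat_singleton_iff s).symm)

theorem flatlyDefines_pos (i : V) : FlatlyDefines (.pos i) (fun s => s i = true) :=
  fun _ => Iff.rfl

theorem flatlyDefines_neg (i : V) : FlatlyDefines (.neg i) (fun s => s i = false) :=
  fun _ => Iff.rfl

theorem flatlyDefines_bot : FlatlyDefines (.bot : PTForm V) (fun _ => False) :=
  fun _ => Set.eq_empty_iff_forall_notMem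

theorem FlatlyDefines.and (hφ : FlatlyDefines φ A) (hψ : FlatlyDefines ψ B) :
    FlatlyDefines (.and φ ψ) (fun s => A s ∧ B s) :=
  fun X => ((hφ X).and (hψ X)).trans
    ⟨fun h s hs => ⟨h.1 s hs, h.2 s hs⟩, fun h => ⟨fun s hs => (h s hs).1, fun s hs => (h s hs).2⟩⟩

theorem FlatlyDefines.tensor (hφ : FlatlyDefines φ A) (hψ : FlatlyDefines ψ B) :
    FlatlyDefines (.tensor φ ψ) (fun s => A s ∨ B s) := by
  intro X
  constructor
  · rintro ⟨Y, Z, rfl, hY, hZ⟩ s (hs | hs)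
    exacts [Or.inl ((hφ Y).1 hY s hs), Or.inr ((hψ Z).1 hZ s hs)]
  · intro hX
    refine ⟨{s ∈ X | A s}, {s ∈ X | B s}, ?_, (hφ _).2 fun s hs => hs.2, (hψ _).2 fun s hs => hs.2⟩
    rw [← Set.sep_or, Set.sep_eq_self_iff_mem_true.2 hX]

theorem IsClassical.exists_flatlyDefines (hψ : IsClassical ψ) : ∃ A, FlatlyDefines ψ A := by
  induction hψ with
  | pos i => exact ⟨_, flatlyDefines_pos i⟩
  | neg i => exact ⟨_, flatlyDefines_neg i⟩
  | bot => exact ⟨_, flatlyDefines_bot⟩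
  | and _ _ ih₁ ih₂ =>
    obtain ⟨A, hA⟩ := ih₁
    obtain ⟨B, hB⟩ := ih₂
    exact ⟨_, hA.and hB⟩
  | tensor _ _ ih₁ ih₂ =>
    obtain ⟨A, hA⟩ := ih₁
    obtain ⟨B, hB⟩ := ih₂
    exact ⟨_, hA.tensor hB⟩

theorem exists_classical_flatlyDefines [Inhabited V] (L : List V) (A : (V → Bool) → Prop)
    (hA : ∀ s s', (∀ i ∈ L, s i = s' i) → A s → A s') :
    ∃ ψ, IsClassical ψ ∧ FlatlyDefines ψ A := by
  classical
  induction L generalizing A with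
  | nil =>
    by_cases hsat : ∃ s, A s
    · obtain ⟨s, hs⟩ := hsat
      refine ⟨.tensor (.pos default) (.neg default), .tensor (.pos _) (.neg _),
        ((flatlyDefines_pos _).tensor (flatlyDefines_neg _)).congr fun t => ?_⟩
      simpa using hA s t (by simp) hs
    · exact ⟨.bot, .bot,
        flatlyDefines_bot.congr fun t => (iff_false_intro (not_exists.1 hsat t)).symm⟩
  | cons i L ih =>
    have hupdate (b : Bool) : ∀ s s', (∀ j ∈ L, s j = s' j) →
        A (Function.update s i b) → A (Function.update s' i b) := by
      refine fun s s' hss' => hA _ _ fun j hj => ?_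
      by_cases hji : j = i
      · subst hji; simp
      · simpa [Function.update_of_ne hji] using hss' j ((List.mem_cons.1 hj).resolve_left hji)
    obtain ⟨ψ₁, hψ₁, h₁⟩ := ih _ (hupdate true)
    obtain ⟨ψ₀, hψ₀, h₀⟩ := ih _ (hupdate false)
    refine ⟨.tensor (.and (.pos i) ψ₁) (.and (.neg i) ψ₀), .tensor (.and (.pos i) hψ₁)
      (.and (.neg i) hψ₀), (((flatlyDefines_pos i).and h₁).tensor
        ((flatlyDefines_neg i).and h₀)).congr fun s => ?_⟩
    have hs (b : Bool) (hb : s i = b) : Function.update s i b = s :=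
      hb ▸ Function.update_eq_self i s
    cases hsi : s i <;> simp [hs _ hsi]

end FlatlyDefines

section Locality

variable {V : Type}

theorem PTForm.vars_finite (φ : PTForm V) : φ.vars.Finite := by
  induction φ <;> simp_all [PTForm.vars, List.finite_toSet]

theorem PTSat.image_const_of_subset_singleton {φ : PTForm V} {s s' : V → Bool}
    (hss' : Set.EqOn s s' φ.vars) {X : Set (V → Bool)} (hX : X ⊆ {s}) (h : PTSat X φ) :
    PTSat ((fun _ => s') '' X) φ := by
  induction φ generalizing X with
  | pos i | neg i =>
    rintro _ ⟨u, hu, rfl⟩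
    have hui := h u hu
    rwa [Set.mem_singleton_iff.1 (hX hu), hss' rfl] at hui
  | bot => exact Set.image_eq_empty.2 h
  | ne => exact (Set.image_nonempty.2 (Set.nonempty_iff_ne_empty.2 h)).ne_empty
  | dep => rintro _ ⟨_, _, rfl⟩ _ ⟨_, _, rfl⟩ _; rfl
  | indep =>
    rintro _ ⟨u, hu, rfl⟩ _ ⟨_, _, rfl⟩
    exact ⟨s', ⟨u, hu, rfl⟩, fun _ _ => rfl, fun _ _ => rfl⟩
  | incl xs ys =>
    rintro _ ⟨u, hu, rfl⟩
    obtain ⟨w, hw, huw⟩ := h u hu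
    refine ⟨s', ⟨w, hw, rfl⟩, fun p hp => ?_⟩
    have hs := huw p hp
    rw [Set.mem_singleton_iff.1 (hX hu), Set.mem_singleton_iff.1 (hX hw)] at hs
    rwa [hss' (Or.inl (List.of_mem_zip hp).1), hss' (Or.inr (List.of_mem_zip hp).2)] at hs
  | and φ ψ ihφ ihψ =>
    exact ⟨ihφ (fun _ hi => hss' (Or.inl hi)) hX h.1, ihψ (fun _ hi => hss' (Or.inr hi)) hX h.2⟩
  | tensor φ ψ ihφ ihψ =>
    obtain ⟨Y, Z, rfl, hY, hZ⟩ := h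
    exact ⟨_, _, Set.image_union _ _ _,
      ihφ (fun _ hi => hss' (Or.inl hi)) (Set.subset_union_left.trans hX) hY,
      ihψ (fun _ hi => hss' (Or.inr hi)) (Set.subset_union_right.trans hX) hZ⟩
  | nsor φ ψ ihφ ihψ =>
    rcases h with rfl | ⟨Y, Z, rfl, hYne, hZne, hY, hZ⟩
    · exact Or.inl (Set.image_empty _)
    · exact Or.inr ⟨_, _, Set.image_union _ _ _, hYne.image _, hZne.image _,
        ihφ (fun _ hi => hss' (Or.inl hi)) (Set.subset_union_left.trans hX) hY,
        ihψ (fun _ hi => hss' (Or.inr hi)) (Set.subset_union_right.trans hX) hZ⟩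
  | bor φ ψ ihφ ihψ =>
    exact h.imp (ihφ (fun _ hi => hss' (Or.inl hi)) hX) (ihψ (fun _ hi => hss' (Or.inr hi)) hX)

theorem PTSat.singleton_of_eqOn {φ : PTForm V} {s s' : V → Bool} (hss' : Set.EqOn s s' φ.vars)
    (h : PTSat {s} φ) : PTSat {s'} φ := by
  simpa using h.image_const_of_subset_singleton hss' subset_rfl

end Locality

theorem isFlat_iff_exists_classical {V : Type} [Inhabited V] (φ : PTForm V) :
    IsFlat {X | PTSat X φ} ↔ ∃ ψ, IsClassical ψ ∧ ∀ X, PTSat X φ ↔ PTSat X ψ := by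
  constructor
  · intro hflat
    obtain ⟨ψ, hψ, hψdef⟩ := exists_classical_flatlyDefines φ.vars_finite.toFinset.toList
      (fun s => PTSat {s} φ) fun s s' hss' =>
        PTSat.singleton_of_eqOn fun i hi => hss' i (by simpa using hi)
    exact ⟨ψ, hψ, fun X => (hflat X).trans (hψdef X).symm⟩
  · rintro ⟨ψ, hψ, hφψ⟩
    obtain ⟨A, hA⟩ := hψ.exists_flatlyDefines
    exact FlatlyDefines.isFlat fun X => (hφψ X).trans (hA X)

/-- For every FPT formula `φ` the following are equivalent:
(i) flatness; (ii) semantic equivalence to a classical formula;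
(iii) downward closure together with union closure (over arbitrary,
possibly empty, families of teams). -/
theorem flatness_characterization (φ : PTForm ℕ) :
    ((∀ X : Set (ℕ → Bool),
        PTSat X φ ↔ ∀ s ∈ X, PTSat ({s} : Set (ℕ → Bool)) φ) ↔
      (∃ ψ : PTForm ℕ, IsClassical ψ ∧
        ∀ X : Set (ℕ → Bool), PTSat X φ ↔ PTSat X ψ)) ∧
    ((∀ X : Set (ℕ → Bool),
        PTSat X φ ↔ ∀ s ∈ X, PTSat ({s} : Set (ℕ → Bool)) φ) ↔
      ((∀ X Y : Set (ℕ → Bool), PTSat X φ → Y ⊆ X → PTSat Y φ) ∧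
       (∀ 𝒳 : Set (Set (ℕ → Bool)), (∀ X ∈ 𝒳, PTSat X φ) → PTSat (⋃₀ 𝒳) φ))) :=
  ⟨isFlat_iff_exists_classical φ, isFlat_iff_downwardClosed_and_unionClosed _⟩
end

section
/- Strong propositional team logic PT⁺ characterizes the set of all team properties: for every finite index set N = {i₁,…,iₙ} and every set P ⊆ 𝒫(2^N) of teams on N, there is a formula φ in the language of PT⁺ whose variables are among {p_i : i∈N} such that for every team Y on N, Y ⊨ φ if and only if Y ∈ P. -/
/-!
Every team on a finite index set is finite, so a team `X` is pinned down by
`⊗_{s ∈ X} (NE ∧ ⋀ᵢ pᵢ^{s(i)})`: the `NE` forces each disjunct to be exactly `{s}`.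
There are only finitely many teams, so an arbitrary property `P` is the Boolean
disjunction of these descriptions over `X ∈ P`.
-/

def IsPTPlusDefinable {V : Type} (P : Set (Set (V → Bool))) : Prop :=
  ∃ φ : PTForm V, IsPTPlus φ ∧ ∀ Y : Set (V → Bool), PTSat Y φ ↔ Y ∈ P

namespace IsPTPlusDefinable

variable {V : Type} {P Q : Set (Set (V → Bool))}

theorem inter (hP : IsPTPlusDefinable P) (hQ : IsPTPlusDefinable Q) :
    IsPTPlusDefinable (P ∩ Q) := by
  obtain ⟨φ, hφ, hφP⟩ := hP
  obtain ⟨ψ, hψ, hψQ⟩ := hQ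
  exact ⟨.and φ ψ, .and hφ hψ, fun Y => and_congr (hφP Y) (hψQ Y)⟩

theorem union (hP : IsPTPlusDefinable P) (hQ : IsPTPlusDefinable Q) :
    IsPTPlusDefinable (P ∪ Q) := by
  obtain ⟨φ, hφ, hφP⟩ := hP
  obtain ⟨ψ, hψ, hψQ⟩ := hQ
  exact ⟨.bor φ ψ, .bor hφ hψ, fun Y => or_congr (hφP Y) (hψQ Y)⟩

theorem image2_union (hP : IsPTPlusDefinable P) (hQ : IsPTPlusDefinable Q) :
    IsPTPlusDefinable (Set.image2 (· ∪ ·) P Q) := by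
  obtain ⟨φ, hφ, hφP⟩ := hP
  obtain ⟨ψ, hψ, hψQ⟩ := hQ
  refine ⟨.tensor φ ψ, .tensor hφ hψ, fun Y => ?_⟩
  simp only [PTSat, hφP, hψQ, Set.mem_image2]
  constructor
  · rintro ⟨A, B, rfl, hA, hB⟩
    exact ⟨A, hA, B, hB, rfl⟩
  · rintro ⟨A, hA, B, hB, rfl⟩
    exact ⟨A, B, rfl, hA, hB⟩

theorem empty : IsPTPlusDefinable (∅ : Set (Set (V → Bool))) :=
  ⟨.and .bot .ne, .and .bot .ne, fun Y => by simp [PTSat]⟩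

theorem univ : IsPTPlusDefinable (Set.univ : Set (Set (V → Bool))) :=
  ⟨.bor .bot .ne, .bor .bot .ne, fun Y => by simp [PTSat, em]⟩

theorem singleton_empty : IsPTPlusDefinable ({∅} : Set (Set (V → Bool))) :=
  ⟨.bot, .bot, fun Y => by simp [PTSat]⟩

theorem setOf_nonempty : IsPTPlusDefinable {Y : Set (V → Bool) | Y.Nonempty} :=
  ⟨.ne, .ne, fun Y => by simp [PTSat, Set.nonempty_iff_ne_empty]⟩

theorem setOf_forall_apply_eq (i : V) (b : Bool) :
    IsPTPlusDefinable {Y : Set (V → Bool) | ∀ t ∈ Y, t i = b} := by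
  cases b
  · exact ⟨.neg i, .neg i, fun Y => Iff.rfl⟩
  · exact ⟨.pos i, .pos i, fun Y => Iff.rfl⟩

theorem sUnion {𝒬 : Set (Set (Set (V → Bool)))} (h𝒬 : 𝒬.Finite)
    (h : ∀ Q ∈ 𝒬, IsPTPlusDefinable Q) : IsPTPlusDefinable (⋃₀ 𝒬) := by
  induction 𝒬, h𝒬 using Set.Finite.induction_on with
  | empty => simpa using empty
  | @insert Q 𝒬 _ _ ih =>
    rw [Set.sUnion_insert]
    exact (h Q (Set.mem_insert Q 𝒬)).union (ih fun R hR => h R (Set.mem_insert_of_mem Q hR))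

theorem sInter {𝒬 : Set (Set (Set (V → Bool)))} (h𝒬 : 𝒬.Finite)
    (h : ∀ Q ∈ 𝒬, IsPTPlusDefinable Q) : IsPTPlusDefinable (⋂₀ 𝒬) := by
  induction 𝒬, h𝒬 using Set.Finite.induction_on with
  | empty => simpa using univ
  | @insert Q 𝒬 _ _ ih =>
    rw [Set.sInter_insert]
    exact (h Q (Set.mem_insert Q 𝒬)).inter (ih fun R hR => h R (Set.mem_insert_of_mem Q hR))

theorem iInter {ι : Type*} [Finite ι] {Q : ι → Set (Set (V → Bool))}
    (h : ∀ i, IsPTPlusDefinable (Q i)) : IsPTPlusDefinable (⋂ i, Q i) := by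
  rw [← Set.sInter_range]
  exact sInter (Set.finite_range Q) (Set.forall_mem_range.2 h)

theorem singleton_singleton [Finite V] (s : V → Bool) :
    IsPTPlusDefinable ({{s}} : Set (Set (V → Bool))) := by
  have hdescr : {{s}} = {Y : Set (V → Bool) | Y.Nonempty} ∩
      ⋂ i, {Y : Set (V → Bool) | ∀ t ∈ Y, t i = s i} := by
    ext Y
    simp only [Set.mem_singleton_iff, Set.mem_inter_iff, Set.mem_ofPred_eq, Set.mem_iInter,
      Set.eq_singleton_iff_nonempty_unique_mem, funext_iff]
    exact and_congr_right' ⟨fun h i t ht => h t ht i, fun h t ht i => h i t ht⟩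
  rw [hdescr]
  exact setOf_nonempty.inter (iInter fun i => setOf_forall_apply_eq i (s i))

theorem singleton [Finite V] {X : Set (V → Bool)} (hX : X.Finite) :
    IsPTPlusDefinable ({X} : Set (Set (V → Bool))) := by
  induction X, hX using Set.Finite.induction_on with
  | empty => exact singleton_empty
  | @insert s X _ _ ih =>
    rw [Set.insert_eq, ← Set.image2_singleton]
    exact (singleton_singleton s).image2_union ih

theorem of_finite [Finite V] (P : Set (Set (V → Bool))) : IsPTPlusDefinable P := by
  have h := sUnion ((Set.toFinite P).image fun X => {X})
    (by rintro _ ⟨X, -, rfl⟩; exact singleton (Set.toFinite X))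
  rwa [Set.sUnion_image, Set.biUnion_of_singleton] at h

end IsPTPlusDefinable

theorem ptplus_expressively_complete_general (V : Type) [Fintype V]
    (P : Set (Set (V → Bool))) :
    ∃ φ : PTForm V, IsPTPlus φ ∧
      ∀ Y : Set (V → Bool), PTSat Y φ ↔ Y ∈ P :=
  IsPTPlusDefinable.of_finite P

/-- **PT⁺ characterizes all team properties.**  For every team property `P`
on a finite (nonempty) index set there is a PT⁺ formula defining exactly the
teams in `P`. -/
theorem ptplus_expressively_complete (V : Type) [Fintype V] [Nonempty V]
    (P : Set (Set (V → Bool))) :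
    ∃ φ : PTForm V, IsPTPlus φ ∧
      ∀ Y : Set (V → Bool), PTSat Y φ ↔ Y ∈ P :=
  ptplus_expressively_complete_general V P
end

section
/- Propositional union closed logic PU characterizes the set of all union closed team properties containing the empty team: for every finite index set N = {i₁,…,iₙ}, (a) for every formula φ in the language of PU with variables among {p_i : i∈N}, the set {Y ⊆ 2^N : Y ⊨ φ} contains the empty team and is closed under unions of nonempty subfamilies; and (b) for every set P ⊆ 𝒫(2^N) of teams on N with ∅ ∈ P and with ⋃𝒳 ∈ P for every nonempty 𝒳 ⊆ P, there is a formula φ in the language of PU with variables among {p_i : i∈N} such that for every team Y on N, Y ⊨ φ if and only if Y ∈ P. -/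
section MyAux

variable {V : Type}

lemma sat_lit (s : V → Bool) (i : V) (Y : Set (V → Bool)) :
    PTSat Y (PTlit s i) ↔ ∀ t ∈ Y, t i = s i := by
  unfold PTlit
  cases h : s i <;> simp [PTSat, h]

lemma isPU_lit (s : V → Bool) (i : V) : IsPU (PTlit s i) := by
  unfold PTlit; split
  · exact .pos i
  · exact .neg i

/-- Conjunction of literals of `s` over a list, with base literal. -/
def conjLits (s : V → Bool) (i₀ : V) (l : List V) : PTForm V :=
  l.foldr (fun i ψ => .and (PTlit s i) ψ) (PTlit s i₀)

lemma sat_conjLits (s : V → Bool) (i₀ : V) (l : List V) (Y : Set (V → Bool)) :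
    PTSat Y (conjLits s i₀ l) ↔
      (∀ t ∈ Y, t i₀ = s i₀) ∧ ∀ i ∈ l, ∀ t ∈ Y, t i = s i := by
  induction l with
  | nil => simp [conjLits, sat_lit]
  | cons a r ih =>
      simp only [conjLits, List.foldr_cons] at *
      constructor
      · rintro ⟨h1, h2⟩
        rw [sat_lit] at h1
        rcases ih.mp h2 with ⟨hb, hr⟩
        refine ⟨hb, ?_⟩
        intro i hi
        rcases List.mem_cons.mp hi with h | h
        · subst h; exact h1
        · exact hr i h
      · rintro ⟨hb, hl⟩
        refine ⟨(sat_lit s a Y).mpr (hl a (by simp)), ih.mpr ⟨hb, fun i hi => hl i (by simp [hi])⟩⟩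

lemma isPU_conjLits (s : V → Bool) (i₀ : V) (l : List V) : IsPU (conjLits s i₀ l) := by
  induction l with
  | nil => exact isPU_lit s i₀
  | cons a r ih => exact .and (isPU_lit s a) ih

/-- Formula describing valuation `s` (assuming `V` finite nonempty). -/
noncomputable def myDescr [Fintype V] [Nonempty V] (s : V → Bool) : PTForm V :=
  conjLits s (Classical.arbitrary V) (Finset.univ : Finset V).toList

lemma sat_myDescr [Fintype V] [Nonempty V] (s : V → Bool) (Y : Set (V → Bool)) :
    PTSat Y (myDescr s) ↔ ∀ t ∈ Y, t = s := by
  rw [myDescr, sat_conjLits]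
  constructor
  · rintro ⟨-, h⟩ t ht
    funext i
    exact h i (by simp) t ht
  · intro h
    exact ⟨fun t ht => by rw [h t ht], fun i _ t ht => by rw [h t ht]⟩

lemma isPU_myDescr [Fintype V] [Nonempty V] (s : V → Bool) : IsPU (myDescr s) :=
  isPU_conjLits _ _ _

/-- `⊛` over a list of valuation descriptions. -/
noncomputable def nsorDescr [Fintype V] [Nonempty V] : List (V → Bool) → PTForm V
  | [] => .bot
  | [s] => myDescr s
  | s :: t :: r => .nsor (myDescr s) (nsorDescr (t :: r))

lemma isPU_nsorDescr [Fintype V] [Nonempty V] (l : List (V → Bool)) :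
    IsPU (nsorDescr l) := by
  induction l with
  | nil => exact .bot
  | cons a r ih =>
      cases r with
      | nil => exact isPU_myDescr a
      | cons b r' => exact .nsor (isPU_myDescr a) ih

lemma sat_nsorDescr [Fintype V] [Nonempty V] (l : List (V → Bool)) (Y : Set (V → Bool)) :
    PTSat Y (nsorDescr l) ↔ Y = ∅ ∨ (l ≠ [] ∧ Y = {t | t ∈ l}) := by
  induction l generalizing Y with
  | nil => simp [nsorDescr, PTSat]
  | cons a r ih =>
      cases r with
      | nil =>
          rw [nsorDescr, sat_myDescr]
          have hs : {t | t ∈ [a]} = ({a} : Set (V → Bool)) := by ext u; simp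
          rw [hs]
          constructor
          · intro h
            rcases Set.subset_singleton_iff_eq.mp (Set.subset_singleton_iff.mpr h) with h' | h'
            · exact Or.inl h'
            · exact Or.inr ⟨by simp, h'⟩
          · rintro (h | ⟨-, h⟩) t ht <;> · rw [h] at ht; simpa using ht
      | cons b r' =>
          rw [nsorDescr]
          show Y = ∅ ∨ _ ↔ _
          constructor
          · rintro (h | ⟨Y₁, Y₂, hY, hY₁ne, hY₂ne, h1, h2⟩)
            · exact Or.inl h
            · rw [sat_myDescr] at h1
              rcases (ih Y₂).mp h2 with h | ⟨-, h⟩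
              · exact absurd h (Set.nonempty_iff_ne_empty.mp hY₂ne)
              · refine Or.inr ⟨by simp, ?_⟩
                have hY₁ : Y₁ = {a} := by
                  rcases Set.subset_singleton_iff_eq.mp
                    (Set.subset_singleton_iff.mpr h1) with h' | h'
                  · exact absurd h' (Set.nonempty_iff_ne_empty.mp hY₁ne)
                  · exact h'
                rw [hY, hY₁, h]
                ext u
                simp only [Set.mem_union, Set.mem_singleton_iff, Set.mem_setOf_eq,
                  List.mem_cons]
          · rintro (h | ⟨-, h⟩)
            · exact Or.inl h
            · refine Or.inr ⟨{a}, {t | t ∈ b :: r'}, ?_, ⟨a, rfl⟩, ⟨b, by simp⟩, ?_, ?_⟩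
              · rw [h]
                ext u
                simp only [Set.mem_union, Set.mem_singleton_iff, Set.mem_setOf_eq,
                  List.mem_cons]
              · rw [sat_myDescr]; intro t ht; exact ht
              · exact (ih _).mpr (Or.inr ⟨by simp, rfl⟩)

/-- Formula defining `{∅, X}` for a team `X`. -/
noncomputable def thetaX [Fintype V] [Nonempty V] (X : Set (V → Bool)) : PTForm V :=
  nsorDescr (Set.toFinite X).toFinset.toList

lemma isPU_thetaX [Fintype V] [Nonempty V] (X : Set (V → Bool)) : IsPU (thetaX X) :=
  isPU_nsorDescr _

lemma sat_thetaX [Fintype V] [Nonempty V] (X : Set (V → Bool)) (Y : Set (V → Bool)) :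
    PTSat Y (thetaX X) ↔ Y = ∅ ∨ Y = X := by
  rw [thetaX, sat_nsorDescr]
  have hmem : {t | t ∈ (Set.toFinite X).toFinset.toList} = X := by
    ext t; simp
  rcases Set.eq_empty_or_nonempty X with hX | hX
  · subst hX
    simp only [hmem]
    constructor
    · rintro (h | ⟨-, h⟩) <;> simp [h]
    · rintro (h | h) <;> exact Or.inl h
  · have hne : (Set.toFinite X).toFinset.toList ≠ [] := by
      intro h
      rw [Finset.toList_eq_nil, Set.Finite.toFinset_eq_empty] at h
      exact absurd h (Set.nonempty_iff_ne_empty.mp hX)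
    rw [hmem]
    tauto

/-- Tensor disjunction over a list. -/
def tensorL : List (PTForm V) → PTForm V := List.foldr .tensor .bot

lemma isPU_tensorL (l : List (PTForm V)) (h : ∀ φ ∈ l, IsPU φ) : IsPU (tensorL l) := by
  induction l with
  | nil => exact .bot
  | cons a r ih =>
      exact .tensor (h a (by simp)) (ih fun φ hφ => h φ (by simp [hφ]))

lemma sat_tensorL_theta [Fintype V] [Nonempty V] (l : List (Set (V → Bool)))
    (Y : Set (V → Bool)) :
    PTSat Y (tensorL (l.map thetaX)) ↔
      ∃ 𝒳 : Set (Set (V → Bool)), (∀ X ∈ 𝒳, X ∈ l) ∧ Y = ⋃₀ 𝒳 := by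
  induction l generalizing Y with
  | nil =>
      simp only [List.map_nil, tensorL, List.foldr_nil]
      show Y = ∅ ↔ _
      constructor
      · intro h; exact ⟨∅, by simp, by simp [h]⟩
      · rintro ⟨𝒳, h1, rfl⟩
        have : 𝒳 = ∅ := by
          ext X; simp only [Set.mem_empty_iff_false, iff_false]
          intro hX; simpa using h1 X hX
        simp [this]
  | cons A r ih =>
      simp only [List.map_cons, tensorL, List.foldr_cons]
      show (∃ Y₁ Y₂, _) ↔ _
      constructor
      · rintro ⟨Y₁, Y₂, rfl, h1, h2⟩
        rw [sat_thetaX] at h1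
        rcases (ih Y₂).mp h2 with ⟨𝒳, h𝒳, rfl⟩
        rcases h1 with h1 | h1
        · exact ⟨𝒳, fun X hX => by simp [h𝒳 X hX], by simp [h1]⟩
        · refine ⟨insert A 𝒳, ?_, ?_⟩
          · intro X hX
            rcases Set.mem_insert_iff.mp hX with h | h
            · simp [h]
            · simp [h𝒳 X h]
          · rw [Set.sUnion_insert, h1]
      · rintro ⟨𝒳, h𝒳, rfl⟩
        refine ⟨⋃₀ (𝒳 ∩ {A}), ⋃₀ {Z ∈ 𝒳 | Z ∈ r}, ?_, ?_, ?_⟩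
        · ext t
          simp only [Set.mem_sUnion, Set.mem_union, Set.mem_inter_iff,
            Set.mem_singleton_iff, Set.mem_setOf_eq]
          constructor
          · rintro ⟨Z, hZ, ht⟩
            rcases List.mem_cons.mp (h𝒳 Z hZ) with h | h
            · exact Or.inl ⟨Z, ⟨hZ, h⟩, ht⟩
            · exact Or.inr ⟨Z, ⟨hZ, h⟩, ht⟩
          · rintro (⟨Z, ⟨hZ, -⟩, ht⟩ | ⟨Z, ⟨hZ, -⟩, ht⟩) <;> exact ⟨Z, hZ, ht⟩
        · rw [sat_thetaX]
          rcases Classical.em (A ∈ 𝒳) with h | h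
          · right
            have : 𝒳 ∩ {A} = {A} := by
              ext Z; simp only [Set.mem_inter_iff, Set.mem_singleton_iff]
              exact ⟨fun h => h.2, fun hZ => ⟨hZ ▸ h, hZ⟩⟩
            rw [this]; simp
          · left
            have : 𝒳 ∩ {A} = ∅ := by
              ext Z; simp only [Set.mem_inter_iff, Set.mem_singleton_iff,
                Set.mem_empty_iff_false, iff_false, not_and]
              rintro hZ rfl; exact h hZ
            simp [this]
        · exact (ih _).mpr ⟨_, fun X hX => hX.2, rfl⟩

end MyAux
/-- **PU characterizes the union closed team properties containing the
empty team.**  (a) Every PU formula defines a union closed team property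
containing the empty team; (b) every union closed team property containing
the empty team is definable by a PU formula. -/
theorem pu_characterizes_union_closed_with_empty (V : Type) [Fintype V] [Nonempty V] :
    (∀ φ : PTForm V, IsPU φ →
      PTSat (∅ : Set (V → Bool)) φ ∧ IsUnionClosed {X : Set (V → Bool) | PTSat X φ}) ∧
    (∀ P : Set (Set (V → Bool)), ∅ ∈ P → IsUnionClosed P →
      ∃ φ : PTForm V, IsPU φ ∧
        ∀ Y : Set (V → Bool), PTSat Y φ ↔ Y ∈ P) := by
  constructor
  · intro φ hφ
    induction hφ with
    | pos i =>
        refine ⟨by intro s hs; simp at hs, ?_⟩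
        intro 𝒳 hsub hne s hs
        rcases Set.mem_sUnion.mp hs with ⟨X, hX, hsX⟩
        exact hsub hX s hsX
    | neg i =>
        refine ⟨by intro s hs; simp at hs, ?_⟩
        intro 𝒳 hsub hne s hs
        rcases Set.mem_sUnion.mp hs with ⟨X, hX, hsX⟩
        exact hsub hX s hsX
    | bot =>
        refine ⟨rfl, ?_⟩
        intro 𝒳 hsub hne
        exact Set.sUnion_eq_empty.mpr fun X hX => hsub hX
    | and hφ' hψ' ihφ ihψ =>
        refine ⟨⟨ihφ.1, ihψ.1⟩, ?_⟩
        intro 𝒳 hsub hne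
        exact ⟨ihφ.2 𝒳 (fun X hX => (hsub hX).1) hne,
               ihψ.2 𝒳 (fun X hX => (hsub hX).2) hne⟩
    | tensor hφ' hψ' ihφ ihψ =>
        rename_i _inst1 _inst2 φ' ψ'
        refine ⟨⟨∅, ∅, by simp, ihφ.1, ihψ.1⟩, ?_⟩
        intro 𝒳 hsub hne
        set 𝒴 : Set (Set (V → Bool)) :=
          {Y | PTSat Y φ' ∧ ∃ Z, PTSat Z ψ' ∧ Y ∪ Z ∈ 𝒳} with h𝒴
        set 𝒵 : Set (Set (V → Bool)) :=
          {Z | PTSat Z ψ' ∧ ∃ Y, PTSat Y φ' ∧ Y ∪ Z ∈ 𝒳} with h𝒵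
        have h𝒴ne : 𝒴.Nonempty := by
          rcases hne with ⟨X, hX⟩
          rcases hsub hX with ⟨Y, Z, hXYZ, hY, hZ⟩
          exact ⟨Y, hY, Z, hZ, hXYZ ▸ hX⟩
        have h𝒵ne : 𝒵.Nonempty := by
          rcases hne with ⟨X, hX⟩
          rcases hsub hX with ⟨Y, Z, hXYZ, hY, hZ⟩
          exact ⟨Z, hZ, Y, hY, hXYZ ▸ hX⟩
        refine ⟨⋃₀ 𝒴, ⋃₀ 𝒵, ?_, ihφ.2 𝒴 (fun Y hY => hY.1) h𝒴ne,
                ihψ.2 𝒵 (fun Z hZ => hZ.1) h𝒵ne⟩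
        ext s
        simp only [Set.mem_sUnion, Set.mem_union]
        constructor
        · rintro ⟨X, hX, hsX⟩
          rcases hsub hX with ⟨Y, Z, hXYZ, hY, hZ⟩
          rw [hXYZ] at hsX hX
          rcases hsX with hs | hs
          · exact Or.inl ⟨Y, ⟨hY, Z, hZ, hX⟩, hs⟩
          · exact Or.inr ⟨Z, ⟨hZ, Y, hY, hX⟩, hs⟩
        · rintro (⟨Y, ⟨hY, Z, hZ, hX⟩, hs⟩ | ⟨Z, ⟨hZ, Y, hY, hX⟩, hs⟩)
          · exact ⟨Y ∪ Z, hX, Or.inl hs⟩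
          · exact ⟨Y ∪ Z, hX, Or.inr hs⟩
    | nsor hφ' hψ' ihφ ihψ =>
        rename_i _inst1 _inst2 φ' ψ'
        refine ⟨Or.inl rfl, ?_⟩
        intro 𝒳 hsub hne
        rcases Set.eq_empty_or_nonempty (⋃₀ 𝒳) with hU | hU
        · exact Or.inl hU
        set 𝒴 : Set (Set (V → Bool)) :=
          {Y | Y.Nonempty ∧ PTSat Y φ' ∧ ∃ Z, Z.Nonempty ∧ PTSat Z ψ' ∧ Y ∪ Z ∈ 𝒳} with h𝒴
        set 𝒵 : Set (Set (V → Bool)) :=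
          {Z | Z.Nonempty ∧ PTSat Z ψ' ∧ ∃ Y, Y.Nonempty ∧ PTSat Y φ' ∧ Y ∪ Z ∈ 𝒳} with h𝒵
        have hex : ∃ X ∈ 𝒳, X.Nonempty := by
          rcases hU with ⟨s, hs⟩
          rcases Set.mem_sUnion.mp hs with ⟨X, hX, hsX⟩
          exact ⟨X, hX, s, hsX⟩
        rcases hex with ⟨X, hX, hXne⟩
        have hsplit : ∃ Y Z, X = Y ∪ Z ∧ Y.Nonempty ∧ Z.Nonempty ∧
            PTSat Y φ' ∧ PTSat Z ψ' := by
          rcases hsub hX with h | h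
          · exact absurd h (Set.nonempty_iff_ne_empty.mp hXne)
          · exact h
        rcases hsplit with ⟨Y, Z, hXYZ, hYne, hZne, hY, hZ⟩
        have h𝒴ne : 𝒴.Nonempty := ⟨Y, hYne, hY, Z, hZne, hZ, hXYZ ▸ hX⟩
        have h𝒵ne : 𝒵.Nonempty := ⟨Z, hZne, hZ, Y, hYne, hY, hXYZ ▸ hX⟩
        have hne1 : (⋃₀ 𝒴).Nonempty := ⟨hYne.choose, Y,
          ⟨hYne, hY, Z, hZne, hZ, hXYZ ▸ hX⟩, hYne.choose_spec⟩
        have hne2 : (⋃₀ 𝒵).Nonempty := ⟨hZne.choose, Z,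
          ⟨hZne, hZ, Y, hYne, hY, hXYZ ▸ hX⟩, hZne.choose_spec⟩
        refine Or.inr ⟨⋃₀ 𝒴, ⋃₀ 𝒵, ?_, hne1, hne2,
          ihφ.2 𝒴 (fun A hA => hA.2.1) h𝒴ne,
          ihψ.2 𝒵 (fun A hA => hA.2.1) h𝒵ne⟩
        ext s
        simp only [Set.mem_sUnion, Set.mem_union]
        constructor
        · rintro ⟨X', hX', hsX'⟩
          have hXne' : X'.Nonempty := ⟨s, hsX'⟩
          have hsp : ∃ Y' Z', X' = Y' ∪ Z' ∧ Y'.Nonempty ∧ Z'.Nonempty ∧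
              PTSat Y' φ' ∧ PTSat Z' ψ' := by
            rcases hsub hX' with h | h
            · exact absurd h (Set.nonempty_iff_ne_empty.mp hXne')
            · exact h
          rcases hsp with ⟨Y', Z', hE, hYne', hZne', hY', hZ'⟩
          rw [hE] at hsX' hX'
          rcases hsX' with hs | hs
          · exact Or.inl ⟨Y', ⟨hYne', hY', Z', hZne', hZ', hX'⟩, hs⟩
          · exact Or.inr ⟨Z', ⟨hZne', hZ', Y', hYne', hY', hX'⟩, hs⟩
        · rintro (⟨Y', ⟨-, -, Z', -, -, hX'⟩, hs⟩ | ⟨Z', ⟨-, -, Y', -, -, hX'⟩, hs⟩)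
          · exact ⟨Y' ∪ Z', hX', Or.inl hs⟩
          · exact ⟨Y' ∪ Z', hX', Or.inr hs⟩
  · intro P hemp hUC
    have hPfin := Set.toFinite P
    refine ⟨tensorL ((hPfin.toFinset.toList).map thetaX), ?_, ?_⟩
    · refine isPU_tensorL _ ?_
      intro φ hφ
      rcases List.mem_map.mp hφ with ⟨X, -, rfl⟩
      exact isPU_thetaX X
    · intro Y
      rw [sat_tensorL_theta]
      constructor
      · rintro ⟨𝒳, h𝒳, rfl⟩
        rcases Set.eq_empty_or_nonempty 𝒳 with h | h
        · simpa [h] using hemp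
        · refine hUC 𝒳 ?_ h
          intro X hX
          have := h𝒳 X hX
          simpa using this
      · intro hY
        exact ⟨{Y}, by simpa using hY, (Set.sUnion_singleton Y).symm⟩
end
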